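/- arXiv:2307.15616 — 7 statements merged into one kernel-verified Lean document; each statement's English description precedes it below -/
import Mathlib

section
/- Let p ∈ (1, ∞) with conjugate exponent q (1/p + 1/q = 1). If H^{n₁} ⊆ S_p^{n₁} is a hitting set with hitting ratio τ ≥ 0 (i.e., for every x ∈ S_q^{n₁} there exists v ∈ H^{n₁} with xᵀv ≥ τ), then the set E^{n₂} ⊠ H^{n₁} := { e_j ⊠ v : j = 1,…,n₂, v ∈ H^{n₁} } is a hitting set of S_p^{n₁n₂} with hitting ratio τ / n₂^{1/q}. -/
open scoped BigOperators

/-- The vector `ℓ_p`-norm for finite `p`. -/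
noncomputable def pNorm (p : ℝ) {ι : Type*} [Fintype ι] (x : ι → ℝ) : ℝ :=
  (∑ i, |x i| ^ p) ^ (1 / p)

/-- `H` is a hitting set of the `ℓ_p`-sphere with hitting ratio `τ`: every vector of `H`
lies on the `ℓ_p`-sphere, and every `x` on the `ℓ_q`-sphere satisfies `xᵀv ≥ τ` for some
`v ∈ H`. -/
def IsHittingSet (p q τ : ℝ) {ι : Type*} [Fintype ι] (H : Set (ι → ℝ)) : Prop :=
  (∀ v ∈ H, pNorm p v = 1) ∧
    ∀ x : ι → ℝ, pNorm q x = 1 → ∃ v ∈ H, τ ≤ ∑ i, x i * v i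

/-!
Split `x ∈ S_q^{n₁n₂}` into its `n₂` blocks `x_j ∈ ℝ^{n₁}`. Since `∑ⱼ ‖x_j‖_q^q = 1`, some
block has `‖x_j‖_q ≥ n₂^{-1/q}`. By homogeneity the hitting property of `H` gives `v ∈ H` with
`x_jᵀv ≥ τ ‖x_j‖_q`, and `xᵀ(e_j ⊠ v) = x_jᵀv`, while `e_j ⊠ v` stays on the `ℓ_p`-sphere.
-/

/-- The Kronecker product `e_j ⊠ v`. -/
def blockEmbed {κ ι : Type*} [DecidableEq κ] (j : κ) (v : ι → ℝ) : κ × ι → ℝ :=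
  fun s => if s.1 = j then v s.2 else 0

section pNorm

variable {ι κ : Type*} [Fintype ι] [Fintype κ] {p : ℝ}

lemma sum_abs_rpow_nonneg (x : ι → ℝ) : 0 ≤ ∑ i, |x i| ^ p :=
  Finset.sum_nonneg fun _ _ => Real.rpow_nonneg (abs_nonneg _) _

lemma pNorm_nonneg (x : ι → ℝ) : 0 ≤ pNorm p x :=
  Real.rpow_nonneg (sum_abs_rpow_nonneg x) _

lemma pNorm_rpow (hp : p ≠ 0) (x : ι → ℝ) : pNorm p x ^ p = ∑ i, |x i| ^ p := by
  rw [pNorm, ← Real.rpow_mul (sum_abs_rpow_nonneg x), one_div_mul_cancel hp, Real.rpow_one]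

lemma pNorm_rpow_eq_sum_pNorm_block_rpow (hp : p ≠ 0) (x : κ × ι → ℝ) :
    pNorm p x ^ p = ∑ j, pNorm p (fun i => x (j, i)) ^ p := by
  simp only [pNorm_rpow hp, Fintype.sum_prod_type]

lemma pNorm_div_const (hp : p ≠ 0) (x : ι → ℝ) {a : ℝ} (ha : 0 < a) :
    pNorm p (fun i => x i / a) = pNorm p x / a := by
  simp only [pNorm, abs_div, abs_of_pos ha, Real.div_rpow (abs_nonneg _) ha.le, ← Finset.sum_div]
  rw [Real.div_rpow (sum_abs_rpow_nonneg x) (Real.rpow_nonneg ha.le _), ← Real.rpow_mul ha.le,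
    mul_one_div_cancel hp, Real.rpow_one]

/-- Pigeonhole on the block masses `‖x_j‖_q^q`, which sum to `1`. -/
lemma exists_pNorm_block_ge {q : ℝ} (hq : 0 < q) {x : κ × ι → ℝ} (hx : pNorm q x = 1) :
    ∃ j, 1 / (Fintype.card κ : ℝ) ^ (1 / q) ≤ pNorm q (fun i => x (j, i)) := by
  have hmass := pNorm_rpow_eq_sum_pNorm_block_rpow hq.ne' x
  rw [hx, Real.one_rpow] at hmass
  have hne : (Finset.univ : Finset κ).Nonempty :=
    Finset.nonempty_of_sum_ne_zero (hmass ▸ one_ne_zero)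
  have hcard : (0 : ℝ) < Fintype.card κ := Nat.cast_pos.mpr (Finset.card_pos.mpr hne)
  obtain ⟨j, -, hj⟩ := Finset.exists_le_of_sum_le hne
    (f := fun _ => 1 / (Fintype.card κ : ℝ)) (g := fun j => pNorm q (fun i => x (j, i)) ^ q)
    (by simp [← hmass, hcard.ne'])
  refine ⟨j, ?_⟩
  have := Real.rpow_le_rpow (by positivity) hj (one_div_pos.mpr hq).le
  rwa [← Real.rpow_mul (pNorm_nonneg _), mul_one_div_cancel hq.ne', Real.rpow_one,
    Real.div_rpow zero_le_one hcard.le, Real.one_rpow] at this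

variable [DecidableEq κ]

lemma pNorm_blockEmbed (hp : p ≠ 0) (j : κ) (v : ι → ℝ) :
    pNorm p (blockEmbed j v) = pNorm p v := by
  have hblock : ∀ j',
      ∑ i, |blockEmbed j v (j', i)| ^ p = if j' = j then ∑ i, |v i| ^ p else 0 := by
    intro j'
    by_cases h : j' = j <;> simp [blockEmbed, h, Real.zero_rpow hp]
  simp only [pNorm, Fintype.sum_prod_type, hblock, Finset.sum_ite_eq', Finset.mem_univ,
    if_true]

lemma sum_mul_blockEmbed (x : κ × ι → ℝ) (j : κ) (v : ι → ℝ) :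
    ∑ s, x s * blockEmbed j v s = ∑ i, x (j, i) * v i := by
  simp [blockEmbed, Fintype.sum_prod_type]

end pNorm

lemma IsHittingSet.exists_mul_pNorm_le {ι : Type*} [Fintype ι] {p q τ : ℝ}
    {H : Set (ι → ℝ)} (hH : IsHittingSet p q τ H)
    (hq : q ≠ 0) {x : ι → ℝ} (hx : 0 < pNorm q x) :
    ∃ v ∈ H, τ * pNorm q x ≤ ∑ i, x i * v i := by
  obtain ⟨v, hv, hτv⟩ := hH.2 (fun i => x i / pNorm q x)
    (by rw [pNorm_div_const hq x hx, div_self hx.ne'])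
  refine ⟨v, hv, ?_⟩
  simp only [div_mul_eq_mul_div, ← Finset.sum_div] at hτv
  exact (le_div_iff₀ hx).mp hτv

/-- If `H ⊆ S_p^(n₁)` is a `τ`-hitting set (`τ ≥ 0`), then
`E^(n₂) ⊠ H = { e_j ⊠ v : j, v ∈ H }` is a hitting set of `S_p^(n₁ n₂)` with hitting
ratio `τ / n₂^(1/q)`. -/
theorem stmt7 (p q τ : ℝ) (hp : 1 < p) (hpq : 1 / p + 1 / q = 1) (hτ : 0 ≤ τ)
    (n₁ n₂ : ℕ) (H : Set (Fin n₁ → ℝ)) (hH : IsHittingSet p q τ H) :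
    IsHittingSet p q (τ / (n₂ : ℝ) ^ (1 / q))
      { w : Fin n₂ × Fin n₁ → ℝ |
        ∃ j : Fin n₂, ∃ v ∈ H, w = fun s => if s.1 = j then v s.2 else 0 } := by
  have hconj : p.HolderConjugate q :=
    Real.holderConjugate_iff.mpr ⟨hp, by simpa only [one_div] using hpq⟩
  refine ⟨?_, fun x hx => ?_⟩
  · rintro w ⟨j, v, hv, rfl⟩
    exact (pNorm_blockEmbed hconj.ne_zero j v).trans (hH.1 v hv)
  · obtain ⟨j, hj⟩ := exists_pNorm_block_ge hconj.symm.pos hx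
    rw [Fintype.card_fin] at hj
    have hblock : 0 < pNorm q (fun i => x (j, i)) :=
      lt_of_lt_of_le (one_div_pos.mpr (Real.rpow_pos_of_pos (Nat.cast_pos.mpr j.pos) _)) hj
    obtain ⟨v, hv, hτv⟩ := hH.exists_mul_pNorm_le hconj.symm.ne_zero hblock
    refine ⟨blockEmbed j v, ⟨j, v, hv, rfl⟩, ?_⟩
    calc τ / (n₂ : ℝ) ^ (1 / q) = τ * (1 / (n₂ : ℝ) ^ (1 / q)) := by ring
      _ ≤ τ * pNorm q (fun i => x (j, i)) := mul_le_mul_of_nonneg_left hj hτ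
      _ ≤ _ := hτv.trans (sum_mul_blockEmbed x j v).ge
end

section
/- Let p ∈ (1, ∞), n₁ ≤ n₂, and let H^{n₂} ⊆ S_p^{n₂} be a hitting set with hitting ratio τ > 0 and cardinality at most m. Then the set H^{n₁} := { z/‖z‖_p : z ∈ ℝ^{n₁}, z ≠ 0, and z ∨ y ∈ H^{n₂} for some y ∈ ℝ^{n₂−n₁} } is a hitting set of S_p^{n₁} with hitting ratio at least τ and cardinality at most m. -/
open scoped BigOperators

/-- The set of vectors obtained by cutting the first `n₁` coordinates of vectors in `H`
(whenever nonzero) and renormalizing. -/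
noncomputable def cutSet (p : ℝ) (n₁ n₂ : ℕ) (H : Set (Fin n₁ ⊕ Fin n₂ → ℝ)) :
    Set (Fin n₁ → ℝ) :=
  { w | ∃ z : Fin n₁ → ℝ, z ≠ 0 ∧ (∃ y : Fin n₂ → ℝ, Sum.elim z y ∈ H) ∧
      w = fun i => z i / pNorm p z }

/-!
Extending `x ∈ S_q^{n₁}` by zeros gives a point of `S_q^{n₂}`, so some `v ∈ H` has
`τ ≤ xᵀv = xᵀz`, where `z` is the first block of `v`. Then `z ≠ 0` since `τ > 0`, and
`‖z‖_p ≤ ‖v‖_p = 1`, so renormalizing `z` can only increase `xᵀz`. Cardinality is preserved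
because the cut set is the image of `H` under a single map.
-/

section pNorm

variable {ι κ : Type*} [Fintype ι] [Fintype κ] {p : ℝ}

lemma pNorm_pos {x : ι → ℝ} (hx : x ≠ 0) : 0 < pNorm p x := by
  obtain ⟨i, hi⟩ := Function.ne_iff.mp hx
  refine Real.rpow_pos_of_pos (Finset.sum_pos' (fun j _ => by positivity) ⟨i, by simp, ?_⟩) _
  exact Real.rpow_pos_of_pos (abs_pos.mpr hi) p

lemma pNorm_smul (hp : p ≠ 0) (c : ℝ) (x : ι → ℝ) : pNorm p (c • x) = |c| * pNorm p x := by
  have hsum : ∑ i, |(c • x) i| ^ p = |c| ^ p * ∑ i, |x i| ^ p := by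
    simp only [Pi.smul_apply, smul_eq_mul, abs_mul, Finset.mul_sum]
    exact Finset.sum_congr rfl fun i _ => Real.mul_rpow (abs_nonneg c) (abs_nonneg _)
  rw [pNorm, pNorm, hsum, Real.mul_rpow (by positivity) (by positivity), one_div,
    Real.rpow_rpow_inv (abs_nonneg c) hp]

lemma pNorm_div_pNorm (hp : p ≠ 0) {x : ι → ℝ} (hx : x ≠ 0) :
    pNorm p (fun i => x i / pNorm p x) = 1 := by
  have hpos := pNorm_pos (p := p) hx
  have hsmul : (fun i => x i / pNorm p x) = (pNorm p x)⁻¹ • x := by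
    ext i; simp [div_eq_inv_mul]
  rw [hsmul, pNorm_smul hp, abs_of_pos (inv_pos.mpr hpos), inv_mul_cancel₀ hpos.ne']

-- For `p = 0` both sides are `1`, since `1 / 0 = 0`.
lemma pNorm_sum_elim_zero (p : ℝ) (x : ι → ℝ) :
    pNorm p (Sum.elim x (0 : κ → ℝ)) = pNorm p x := by
  rcases eq_or_ne p 0 with rfl | hp
  · simp [pNorm]
  · simp [pNorm, Fintype.sum_sum_type, Real.zero_rpow hp]

lemma pNorm_comp_inl_le (hp : 0 < p) (v : ι ⊕ κ → ℝ) : pNorm p (v ∘ Sum.inl) ≤ pNorm p v := by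
  refine Real.rpow_le_rpow (by positivity) ?_ (by positivity)
  rw [Fintype.sum_sum_type]
  exact le_add_of_nonneg_right (by positivity)

end pNorm

section cutSet

variable {p : ℝ} {n₁ n₂ : ℕ} {H : Set (Fin n₁ ⊕ Fin n₂ → ℝ)}

lemma cutSet_subset_image :
    cutSet p n₁ n₂ H ⊆ (fun v i => v (Sum.inl i) / pNorm p (v ∘ Sum.inl)) '' H := by
  rintro w ⟨z, -, ⟨y, hy⟩, rfl⟩
  exact ⟨Sum.elim z y, hy, rfl⟩

lemma cutSet_finite (hH : H.Finite) : (cutSet p n₁ n₂ H).Finite :=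
  (hH.image _).subset cutSet_subset_image

lemma cutSet_ncard_le (hH : H.Finite) : (cutSet p n₁ n₂ H).ncard ≤ H.ncard :=
  (Set.ncard_le_ncard cutSet_subset_image (hH.image _)).trans (Set.ncard_image_le hH)

lemma pNorm_of_mem_cutSet (hp : p ≠ 0) {w : Fin n₁ → ℝ} (hw : w ∈ cutSet p n₁ n₂ H) :
    pNorm p w = 1 := by
  obtain ⟨z, hz, -, rfl⟩ := hw
  exact pNorm_div_pNorm hp hz

lemma exists_mem_cutSet_le_inner {q τ : ℝ} (hp : 0 < p) (hτ : 0 < τ)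
    (hH : IsHittingSet p q τ H) {x : Fin n₁ → ℝ} (hx : pNorm q x = 1) :
    ∃ w ∈ cutSet p n₁ n₂ H, τ ≤ ∑ i, x i * w i := by
  obtain ⟨v, hvH, hv⟩ := hH.2 (Sum.elim x 0) (by rwa [pNorm_sum_elim_zero])
  set z := v ∘ Sum.inl
  have hxz : τ ≤ ∑ i, x i * z i := by simpa [z, Fintype.sum_sum_type] using hv
  have hz : z ≠ 0 := by
    rintro hz
    simp only [hz, Pi.zero_apply, mul_zero, Finset.sum_const_zero] at hxz
    exact hxz.not_gt hτ
  have hz_pos : 0 < pNorm p z := pNorm_pos hz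
  have hz_le : pNorm p z ≤ 1 := hH.1 v hvH ▸ pNorm_comp_inl_le hp v
  refine ⟨fun i => z i / pNorm p z,
    ⟨z, hz, ⟨v ∘ Sum.inr, by rwa [Sum.elim_comp_inl_inr]⟩, rfl⟩, ?_⟩
  calc τ ≤ ∑ i, x i * z i := hxz
    _ ≤ (∑ i, x i * z i) / pNorm p z := le_div_self (hτ.le.trans hxz) hz_pos hz_le
    _ = ∑ i, x i * (z i / pNorm p z) := by simp only [Finset.sum_div, mul_div_assoc]

lemma IsHittingSet.cutSet {q τ : ℝ} (hp : 0 < p) (hτ : 0 < τ) (hH : IsHittingSet p q τ H) :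
    IsHittingSet p q τ (cutSet p n₁ n₂ H) :=
  ⟨fun _ hw => pNorm_of_mem_cutSet hp.ne' hw, fun _ hx => exists_mem_cutSet_le_inner hp hτ hH hx⟩

end cutSet

theorem stmt9_general (p q τ : ℝ) (hp : 1 < p) (hτ : 0 < τ)
    (n₁ n₂ M : ℕ) (H : Set (Fin n₁ ⊕ Fin n₂ → ℝ))
    (hH : IsHittingSet p q τ H) (hfin : H.Finite) (hcard : H.ncard ≤ M) :
    IsHittingSet p q τ (cutSet p n₁ n₂ H) ∧
      (cutSet p n₁ n₂ H).Finite ∧ (cutSet p n₁ n₂ H).ncard ≤ M :=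
  ⟨hH.cutSet (zero_lt_one.trans hp) hτ, cutSet_finite hfin, (cutSet_ncard_le hfin).trans hcard⟩

/-- If `H ⊆ S_p^(n₁+n₂)` is a `τ`-hitting set (`τ > 0`) of cardinality at most `M`, then
cutting to the first `n₁` coordinates yields a `τ`-hitting set of `S_p^(n₁)` of
cardinality at most `M`. -/
theorem stmt9 (p q τ : ℝ) (hp : 1 < p) (hpq : 1 / p + 1 / q = 1) (hτ : 0 < τ)
    (n₁ n₂ M : ℕ) (H : Set (Fin n₁ ⊕ Fin n₂ → ℝ))
    (hH : IsHittingSet p q τ H) (hfin : H.Finite) (hcard : H.ncard ≤ M) :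
    IsHittingSet p q τ (cutSet p n₁ n₂ H) ∧
      (cutSet p n₁ n₂ H).Finite ∧ (cutSet p n₁ n₂ H).ncard ≤ M :=
  stmt9_general p q τ hp hτ n₁ n₂ M H hH hfin hcard
end

section
/- For any p ∈ [1, ∞], m, n ∈ ℕ, any x ∈ S_p^n admits y ∈ H where H = { w/‖w‖_p : w ≠ 0, each w_i ∈ {0, ±1/m, ±2/m, …, ±1} } — specifically the vector y = w/‖w‖_p with w_i = ⌈m x_i⌉/m if x_i ≥ 0 and w_i = ⌊m x_i⌋/m if x_i < 0 — such that for every z ∈ ℝ^n: if yᵀz ≥ 0 then yᵀz − ‖z‖_1/m ≤ xᵀz ≤ (1 + n^{1/p}/m) yᵀz + ‖z‖_1/m; and if yᵀz < 0 then (1 + n^{1/p}/m) yᵀz − ‖z‖_1/m ≤ xᵀz ≤ yᵀz + ‖z‖_1/m. -/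
open scoped ENNReal BigOperators

/-!
Rounding away from zero moves each coordinate by at most `1/m` and never shrinks it, so with
`w = gridw m n x` Minkowski's inequality gives `1 = ‖x‖_p ≤ ‖w‖_p ≤ 1 + n^(1/p)/m`, and
`|xᵀz - wᵀz| ≤ ‖z‖₁/m`. As `wᵀz = ‖w‖_p · yᵀz`, the value `wᵀz` lies between `yᵀz` and
`(1 + n^(1/p)/m) yᵀz`.
-/

/-- The vector `ℓ_p`-norm for `p ∈ [1,∞]` (extended-real exponent). -/
noncomputable def lpNorm (p : ℝ≥0∞) {ι : Type*} [Fintype ι] (x : ι → ℝ) : ℝ :=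
  if p = ∞ then ⨆ i, |x i| else (∑ i, |x i| ^ p.toReal) ^ (1 / p.toReal)


/-- Round each entry of `x` away from zero to the grid `{ j/m : j ∈ ℤ }`. -/
noncomputable def gridw (m n : ℕ) (x : Fin n → ℝ) : Fin n → ℝ := fun i =>
  if 0 ≤ x i then (⌈(m : ℝ) * x i⌉ : ℝ) / m else (⌊(m : ℝ) * x i⌋ : ℝ) / m


section Rounding

variable {m n : ℕ} (x : Fin n → ℝ) (i : Fin n)

lemma gridw_bounds_of_nonneg (hm : 0 < m) (h : 0 ≤ x i) :
    x i ≤ gridw m n x i ∧ gridw m n x i ≤ x i + 1 / m := by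
  have hm' : (0 : ℝ) < m := Nat.cast_pos.mpr hm
  rw [gridw, if_pos h, le_div_iff₀ hm', div_le_iff₀ hm', add_mul, one_div_mul_cancel hm'.ne',
    mul_comm]
  exact ⟨Int.le_ceil _, (Int.ceil_lt_add_one _).le⟩

lemma gridw_bounds_of_neg (hm : 0 < m) (h : x i < 0) :
    x i - 1 / m ≤ gridw m n x i ∧ gridw m n x i ≤ x i := by
  have hm' : (0 : ℝ) < m := Nat.cast_pos.mpr hm
  rw [gridw, if_neg h.not_ge, le_div_iff₀ hm', div_le_iff₀ hm', sub_mul,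
    one_div_mul_cancel hm'.ne', mul_comm]
  exact ⟨(sub_lt_iff_lt_add.mpr (Int.lt_floor_add_one _)).le, Int.floor_le _⟩

lemma abs_le_abs_gridw (hm : 0 < m) : |x i| ≤ |gridw m n x i| := by
  rcases le_or_gt 0 (x i) with h | h
  · have := gridw_bounds_of_nonneg x i hm h
    rw [abs_of_nonneg h, abs_of_nonneg (h.trans this.1)]
    exact this.1
  · have := gridw_bounds_of_neg x i hm h
    rw [abs_of_neg h, abs_of_neg (this.2.trans_lt h)]
    exact neg_le_neg this.2

lemma abs_gridw_sub_le (hm : 0 < m) : |gridw m n x i - x i| ≤ 1 / m := by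
  rw [abs_le]
  rcases le_or_gt 0 (x i) with h | h
  · have := gridw_bounds_of_nonneg x i hm h
    constructor <;> linarith [one_div_pos.mpr (Nat.cast_pos.mpr hm : (0 : ℝ) < m)]
  · have := gridw_bounds_of_neg x i hm h
    constructor <;> linarith [one_div_pos.mpr (Nat.cast_pos.mpr hm : (0 : ℝ) < m)]

lemma exists_int_gridw_eq (hx : |x i| ≤ 1) :
    ∃ j : ℤ, |j| ≤ (m : ℤ) ∧ gridw m n x i = (j : ℝ) / m := by
  have hm : (0 : ℝ) ≤ m := m.cast_nonneg
  rw [abs_le] at hx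
  rcases le_or_gt 0 (x i) with h | h
  · refine ⟨⌈(m : ℝ) * x i⌉, abs_le.mpr ⟨?_, ?_⟩, if_pos h⟩
    · have := Int.ceil_nonneg (mul_nonneg hm h)
      omega
    · exact Int.ceil_le.mpr (by push_cast; nlinarith)
  · refine ⟨⌊(m : ℝ) * x i⌋, abs_le.mpr ⟨?_, ?_⟩, if_neg h.not_ge⟩
    · exact Int.le_floor.mpr (by push_cast; nlinarith)
    · have := Int.floor_nonpos (mul_nonpos_of_nonneg_of_nonpos hm h.le)
      omega

end Rounding

section LpNorm

variable {ι : Type*} [Fintype ι] (p : ℝ≥0∞)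

lemma lpNorm_mono {x y : ι → ℝ} (h : ∀ i, |x i| ≤ |y i|) : lpNorm p x ≤ lpNorm p y := by
  unfold lpNorm
  split_ifs
  · exact ciSup_mono (Set.finite_range _).bddAbove h
  · exact Real.rpow_le_rpow (by positivity) (Finset.sum_le_sum fun i _ =>
      Real.rpow_le_rpow (abs_nonneg _) (h i) ENNReal.toReal_nonneg) (by positivity)

lemma abs_le_lpNorm (hp : p ≠ 0) (x : ι → ℝ) (i : ι) : |x i| ≤ lpNorm p x := by
  unfold lpNorm
  split_ifs with hpi
  · exact le_ciSup (Set.finite_range fun j => |x j|).bddAbove i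
  · have hr : 0 < p.toReal := ENNReal.toReal_pos hp hpi
    calc |x i| = (|x i| ^ p.toReal) ^ (1 / p.toReal) := by
          rw [one_div, Real.rpow_rpow_inv (abs_nonneg _) hr.ne']
      _ ≤ (∑ j, |x j| ^ p.toReal) ^ (1 / p.toReal) := by
          gcongr
          exact Finset.single_le_sum (f := fun j => |x j| ^ p.toReal)
            (fun j _ => by positivity) (Finset.mem_univ i)

lemma lpNorm_le_card_rpow_mul (hp : p ≠ 0) {x : ι → ℝ} {c : ℝ} (hc : 0 ≤ c)
    (h : ∀ i, |x i| ≤ c) : lpNorm p x ≤ (Fintype.card ι : ℝ) ^ (1 / p).toReal * c := by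
  unfold lpNorm
  split_ifs with hpi
  · simpa [hpi] using Real.iSup_le h hc
  · have hr : 0 < p.toReal := ENNReal.toReal_pos hp hpi
    calc (∑ i, |x i| ^ p.toReal) ^ (1 / p.toReal)
        ≤ (∑ _i : ι, c ^ p.toReal) ^ (1 / p.toReal) := by
          gcongr with i
          exact h i
      _ = (Fintype.card ι : ℝ) ^ (1 / p).toReal * c := by
          rw [Finset.sum_const, Finset.card_univ, nsmul_eq_mul,
            Real.mul_rpow (by positivity) (by positivity), one_div, one_div,
            ENNReal.toReal_inv, Real.rpow_rpow_inv hc hr.ne']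

lemma lpNorm_add_le (hp : 1 ≤ p) (x y : ι → ℝ) :
    lpNorm p (x + y) ≤ lpNorm p x + lpNorm p y := by
  unfold lpNorm
  split_ifs with hpi
  · have hbdd (v : ι → ℝ) := (Set.finite_range fun i => |v i|).bddAbove
    refine Real.iSup_le (fun i => (abs_add_le _ _).trans ?_) ?_
    · exact add_le_add (le_ciSup (hbdd x) i) (le_ciSup (hbdd y) i)
    · exact add_nonneg (Real.iSup_nonneg fun _ => abs_nonneg _)
        (Real.iSup_nonneg fun _ => abs_nonneg _)
  · exact Real.Lp_add_le _ x y (by simpa using ENNReal.toReal_mono hpi hp)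

end LpNorm

lemma lpNorm_gridw_le (p : ℝ≥0∞) (hp : 1 ≤ p) {m n : ℕ} (hm : 0 < m) (x : Fin n → ℝ) :
    lpNorm p (gridw m n x) ≤ lpNorm p x + (n : ℝ) ^ (1 / p).toReal / m := by
  have hp0 : p ≠ 0 := (zero_lt_one.trans_le hp).ne'
  calc lpNorm p (gridw m n x) = lpNorm p (x + (gridw m n x - x)) := by
        rw [add_sub_cancel]
    _ ≤ lpNorm p x + lpNorm p (gridw m n x - x) := lpNorm_add_le p hp _ _
    _ ≤ lpNorm p x + (n : ℝ) ^ (1 / p).toReal / m := by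
        gcongr
        have := lpNorm_le_card_rpow_mul p hp0 (x := gridw m n x - x) (by positivity)
          (abs_gridw_sub_le x · hm)
        rwa [Fintype.card_fin, mul_one_div] at this

lemma abs_sum_mul_sub_sum_mul_le {ι : Type*} [Fintype ι] {a b : ι → ℝ} {ε : ℝ}
    (h : ∀ i, |a i - b i| ≤ ε) (z : ι → ℝ) :
    |∑ i, a i * z i - ∑ i, b i * z i| ≤ ε * ∑ i, |z i| := by
  rw [← Finset.sum_sub_distrib, Finset.mul_sum]
  refine (Finset.abs_sum_le_sum_abs _ _).trans (Finset.sum_le_sum fun i _ => ?_)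
  rw [← sub_mul, abs_mul]
  exact mul_le_mul_of_nonneg_right (h i) (abs_nonneg _)

lemma bounds_of_abs_sub_mul_le {t u N C e : ℝ} (hN₁ : 1 ≤ N) (hN₂ : N ≤ 1 + C)
    (h : |t - N * u| ≤ e) :
    (0 ≤ u → u - e ≤ t ∧ t ≤ (1 + C) * u + e) ∧
      (u < 0 → (1 + C) * u - e ≤ t ∧ t ≤ u + e) := by
  rw [abs_le] at h
  constructor <;> intro hu <;> constructor <;> nlinarith

/-- For any `x ∈ S_p^n` there is a grid point `y = w/‖w‖_p` (with `w` the rounding of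
`x`, entries in `(0, ±1/m, …, ±1)`, `w ≠ 0`) such that for every `z ∈ ℝ^n`:
if `yᵀz ≥ 0` then `yᵀz − ‖z‖₁/m ≤ xᵀz ≤ (1 + n^(1/p)/m) yᵀz + ‖z‖₁/m`, and if
`yᵀz < 0` then `(1 + n^(1/p)/m) yᵀz − ‖z‖₁/m ≤ xᵀz ≤ yᵀz + ‖z‖₁/m`. -/
theorem stmt11 (p : ℝ≥0∞) (hp : 1 ≤ p) (n m : ℕ) (hm : 0 < m)
    (x : Fin n → ℝ) (hx : lpNorm p x = 1)
    (y : Fin n → ℝ) (hy : y = fun i => gridw m n x i / lpNorm p (gridw m n x)) :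
    (∀ i, ∃ j : ℤ, |j| ≤ (m : ℤ) ∧ gridw m n x i = (j : ℝ) / m) ∧
    gridw m n x ≠ 0 ∧
    ∀ z : Fin n → ℝ,
      (0 ≤ ∑ i, y i * z i →
        (∑ i, y i * z i) - (∑ i, |z i|) / m ≤ ∑ i, x i * z i ∧
        ∑ i, x i * z i ≤
          (1 + (n : ℝ) ^ (1 / p).toReal / m) * (∑ i, y i * z i) + (∑ i, |z i|) / m) ∧
      ((∑ i, y i * z i) < 0 →
        (1 + (n : ℝ) ^ (1 / p).toReal / m) * (∑ i, y i * z i) - (∑ i, |z i|) / m ≤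
          ∑ i, x i * z i ∧
        ∑ i, x i * z i ≤ (∑ i, y i * z i) + (∑ i, |z i|) / m) := by
  have hp0 : p ≠ 0 := (zero_lt_one.trans_le hp).ne'
  set w := gridw m n x
  have hN₁ : 1 ≤ lpNorm p w := hx ▸ lpNorm_mono p (abs_le_abs_gridw x · hm)
  have hN₂ : lpNorm p w ≤ 1 + (n : ℝ) ^ (1 / p).toReal / m := hx ▸ lpNorm_gridw_le p hp hm x
  refine ⟨fun i => exists_int_gridw_eq x i (hx ▸ abs_le_lpNorm p hp0 x i), fun hw => ?_, fun z => ?_⟩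
  · have := lpNorm_le_card_rpow_mul p hp0 le_rfl fun i => by
      simpa [w, hw] using abs_le_abs_gridw x i hm
    rw [hx, mul_zero] at this
    exact absurd this zero_lt_one.not_ge
  · have hyz : ∑ i, y i * z i = (∑ i, w i * z i) / lpNorm p w := by
      rw [hy, Finset.sum_div]
      simp only [div_mul_eq_mul_div]
    rw [hyz]
    apply bounds_of_abs_sub_mul_le hN₁ hN₂
    rw [mul_div_cancel₀ _ (zero_lt_one.trans_le hN₁).ne', ← one_div_mul_eq_div]
    exact abs_sum_mul_sub_sum_mul_le (fun i => abs_sub_comm (x i) (w i) ▸ abs_gridw_sub_le x i hm) z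
end

section
/- Let T ∈ ℝ^{n₁ × n₂ × ⋯ × n_d}, p ∈ [1, ∞]. Then ‖T‖_p ≤ ‖T‖_{p,*} ≤ ∑_{i₁,…,i_{d−1}} ‖t_{i₁…i_{d−1}}‖_p, where ‖T‖_p is the entrywise ℓ_p-norm of T, t_{i₁…i_{d−1}} ∈ ℝ^{n_d} is the mode-d fiber with the other indices fixed, and ‖T‖_{p,*} is the nuclear p-norm. -/
/-!
For the lower bound, the `ℓ_p`-norm of a rank-one tensor `x¹ ⊗ ⋯ ⊗ x^d` is at most
`∏ ‖x^k‖_p` (with equality for `p < ∞`, since `∑ ∏ |x^k|^p = ∏ ∑ |x^k|^p`), so the triangle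
inequality bounds `‖T‖_p` by the cost `∑ |λ_i|` of every decomposition of `T`.
For the upper bound, `T = ∑ e_{i₁} ⊗ ⋯ ⊗ e_{i_d} ⊗ t_{i₁…i_d}`, summed over all mode-`(d+1)`
fibers; normalising every factor of a rank-one term moves its norms into the coefficient, so this
decomposition costs `∑ ‖t_{i₁…i_d}‖_p`.
-/

open scoped ENNReal BigOperators

/-- The nuclear `p`-norm of a tensor: the infimum of `∑ |λ_i|` over rank-one
decompositions `T = ∑ λ_i x_i^1 ⊗ ⋯ ⊗ x_i^d` with unit `ℓ_p`-vectors `x_i^k`. -/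
noncomputable def nucPNorm (p : ℝ≥0∞) {ι : Type*} [Fintype ι] {dims : ι → ℕ}
    (T : (∀ k, Fin (dims k)) → ℝ) : ℝ :=
  sInf { s | ∃ r : ℕ, ∃ lam : Fin r → ℝ, ∃ x : Fin r → ∀ k, Fin (dims k) → ℝ,
    (∀ i k, lpNorm p (x i k) = 1) ∧
    (∀ idx, T idx = ∑ i, lam i * ∏ k, x i k (idx k)) ∧
    s = ∑ i, |lam i| }


section lpNorm

variable {p : ℝ≥0∞} {ι : Type*} [Fintype ι]

lemma lpNorm_eq_norm [Fact (1 ≤ p)] (x : ι → ℝ) : lpNorm p x = ‖WithLp.toLp p x‖ := by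
  rcases eq_or_ne p ∞ with rfl | hp
  · simp [lpNorm, PiLp.norm_eq_ciSup]
  · have hp₀ : 0 < p.toReal :=
      ENNReal.toReal_pos (zero_lt_one.trans_le Fact.out).ne' hp
    simp [lpNorm, hp, PiLp.norm_eq_sum hp₀]

lemma lpNorm_nonneg [Fact (1 ≤ p)] (x : ι → ℝ) : 0 ≤ lpNorm p x :=
  (lpNorm_eq_norm (p := p) x).symm ▸ norm_nonneg _

lemma lpNorm_eq_zero_iff [Fact (1 ≤ p)] {x : ι → ℝ} : lpNorm p x = 0 ↔ x = 0 := by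
  rw [lpNorm_eq_norm (p := p) x, norm_eq_zero, WithLp.toLp_eq_zero]

lemma lpNorm_smul [Fact (1 ≤ p)] (c : ℝ) (x : ι → ℝ) :
    lpNorm p (c • x) = |c| * lpNorm p x := by
  rw [lpNorm_eq_norm, lpNorm_eq_norm, WithLp.toLp_smul, norm_smul, Real.norm_eq_abs]

lemma lpNorm_sum_le [Fact (1 ≤ p)] {J : Type*} (s : Finset J) (f : J → ι → ℝ) :
    lpNorm p (∑ j ∈ s, f j) ≤ ∑ j ∈ s, lpNorm p (f j) := by
  simp only [lpNorm_eq_norm, WithLp.toLp_sum]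
  exact norm_sum_le _ _

lemma lpNorm_single [Fact (1 ≤ p)] [DecidableEq ι] (i : ι) :
    lpNorm p (Pi.single i (1 : ℝ)) = 1 := by
  rw [lpNorm_eq_norm, PiLp.toLp_single, PiLp.norm_single, norm_one]

lemma exists_lpNorm_eq_one_smul_eq [Fact (1 ≤ p)] [Nonempty ι] (y : ι → ℝ) :
    ∃ u : ι → ℝ, lpNorm p u = 1 ∧ lpNorm p y • u = y := by
  classical
  by_cases hy : y = 0
  · exact ⟨Pi.single (Classical.arbitrary ι) 1, lpNorm_single _,
      by simp [hy, lpNorm_eq_zero_iff]⟩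
  · have hy' : lpNorm p y ≠ 0 := lpNorm_eq_zero_iff.not.mpr hy
    refine ⟨(lpNorm p y)⁻¹ • y, ?_, smul_inv_smul₀ hy' y⟩
    rw [lpNorm_smul, abs_inv, abs_of_nonneg (lpNorm_nonneg y), inv_mul_cancel₀ hy']

lemma lpNorm_prod_le [DecidableEq ι] {κ : ι → Type*} [∀ i, Fintype (κ i)] (x : ∀ i, κ i → ℝ) :
    lpNorm p (fun idx : ∀ i, κ i => ∏ i, x i (idx i)) ≤ ∏ i, lpNorm p (x i) := by
  rcases eq_or_ne p ∞ with rfl | hp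
  · simp only [lpNorm, if_true]
    refine Real.iSup_le (fun idx => ?_)
      (Finset.prod_nonneg fun i _ => Real.iSup_nonneg fun _ => abs_nonneg _)
    rw [Finset.abs_prod]
    exact Finset.prod_le_prod (fun i _ => abs_nonneg _)
      fun i _ => le_ciSup (f := fun j => |x i j|) (Set.finite_range _).bddAbove (idx i)
  · apply le_of_eq
    simp only [lpNorm, hp, if_false, Finset.abs_prod]
    simp_rw [← Real.finsetProd_rpow _ _ fun i _ => abs_nonneg _]
    rw [← Fintype.prod_sum (fun i j => |x i j| ^ p.toReal),
      Real.finsetProd_rpow _ _ fun i _ => Finset.sum_nonneg fun _ _ => by positivity]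

end lpNorm

lemma prod_single_one_apply {R : Type*} [CommMonoidWithZero R] {ι : Type*} [Fintype ι]
    [DecidableEq ι] {κ : ι → Type*} [∀ i, DecidableEq (κ i)] (j idx : ∀ i, κ i) :
    ∏ i, (Pi.single (j i) (1 : R) : κ i → R) (idx i) = if j = idx then 1 else 0 := by
  split_ifs with h
  · subst h
    simp
  · obtain ⟨i, hi⟩ := Function.ne_iff.mp h
    exact Finset.prod_eq_zero (Finset.mem_univ i) (Pi.single_eq_of_ne' hi 1)

section Nuclear

variable {p : ℝ≥0∞} {ι : Type*} [Fintype ι] {dims : ι → ℕ}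

def nuclearDecompositionCosts (p : ℝ≥0∞) (T : (∀ k, Fin (dims k)) → ℝ) : Set ℝ :=
  { s | ∃ r : ℕ, ∃ lam : Fin r → ℝ, ∃ x : Fin r → ∀ k, Fin (dims k) → ℝ,
    (∀ i k, lpNorm p (x i k) = 1) ∧
    (∀ idx, T idx = ∑ i, lam i * ∏ k, x i k (idx k)) ∧
    s = ∑ i, |lam i| }

lemma nucPNorm_eq_sInf (T : (∀ k, Fin (dims k)) → ℝ) :
    nucPNorm p T = sInf (nuclearDecompositionCosts p T) :=
  rfl

lemma bddBelow_nuclearDecompositionCosts (T : (∀ k, Fin (dims k)) → ℝ) :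
    BddBelow (nuclearDecompositionCosts p T) := by
  refine ⟨0, ?_⟩
  rintro _ ⟨r, lam, x, -, -, rfl⟩
  positivity

lemma sum_abs_mem_nuclearDecompositionCosts {T : (∀ k, Fin (dims k)) → ℝ} {J : Type*}
    [Fintype J] (lam : J → ℝ) (x : J → ∀ k, Fin (dims k) → ℝ)
    (hx : ∀ j k, lpNorm p (x j k) = 1) (hT : ∀ idx, T idx = ∑ j, lam j * ∏ k, x j k (idx k)) :
    ∑ j, |lam j| ∈ nuclearDecompositionCosts p T := by
  let e := (Fintype.equivFin J).symm
  refine ⟨Fintype.card J, lam ∘ e, x ∘ e, fun i k => hx (e i) k, fun idx => ?_, ?_⟩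
  · rw [hT idx]
    exact (e.sum_comp fun j => lam j * ∏ k, x j k (idx k)).symm
  · exact (e.sum_comp fun j => |lam j|).symm

lemma nucPNorm_le_sum_abs {T : (∀ k, Fin (dims k)) → ℝ} {J : Type*} [Fintype J]
    (lam : J → ℝ) (x : J → ∀ k, Fin (dims k) → ℝ)
    (hx : ∀ j k, lpNorm p (x j k) = 1) (hT : ∀ idx, T idx = ∑ j, lam j * ∏ k, x j k (idx k)) :
    nucPNorm p T ≤ ∑ j, |lam j| := by
  rw [nucPNorm_eq_sInf]
  exact csInf_le (bddBelow_nuclearDecompositionCosts T)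
    (sum_abs_mem_nuclearDecompositionCosts lam x hx hT)

lemma lpNorm_le_sum_abs [Fact (1 ≤ p)] [DecidableEq ι] {κ : ι → Type*} [∀ k, Fintype (κ k)]
    {T : (∀ k, κ k) → ℝ} {J : Type*} [Fintype J] (lam : J → ℝ) (x : J → ∀ k, κ k → ℝ)
    (hx : ∀ j k, lpNorm p (x j k) = 1) (hT : ∀ idx, T idx = ∑ j, lam j * ∏ k, x j k (idx k)) :
    lpNorm p T ≤ ∑ j, |lam j| := by
  have hT' : T = ∑ j, lam j • fun idx : ∀ k, κ k => ∏ k, x j k (idx k) := by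
    ext idx
    simp [hT idx]
  calc lpNorm p T ≤ ∑ j, |lam j| * lpNorm p (fun idx : ∀ k, κ k => ∏ k, x j k (idx k)) := by
        rw [hT']
        refine (lpNorm_sum_le _ _).trans_eq ?_
        simp only [lpNorm_smul]
    _ ≤ ∑ j, |lam j| * ∏ k, lpNorm p (x j k) := by
        gcongr with j
        exact lpNorm_prod_le _
    _ = ∑ j, |lam j| := by simp [hx]

lemma lpNorm_le_nucPNorm [Fact (1 ≤ p)] [DecidableEq ι] (T : (∀ k, Fin (dims k)) → ℝ) :
    lpNorm p T ≤ nucPNorm p T := by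
  have hbasis (idx : ∀ k, Fin (dims k)) :
      T idx = ∑ j, T j * ∏ k, (Pi.single (j k) 1 : Fin (dims k) → ℝ) (idx k) := by
    simp [prod_single_one_apply]
  rw [nucPNorm_eq_sInf]
  refine le_csInf
    ⟨_, sum_abs_mem_nuclearDecompositionCosts T _ (fun _ _ => lpNorm_single _) hbasis⟩ ?_
  rintro _ ⟨r, lam, x, hx, hT, rfl⟩
  exact lpNorm_le_sum_abs lam x hx hT

lemma nucPNorm_le_sum_prod_lpNorm [Fact (1 ≤ p)] {T : (∀ k, Fin (dims k)) → ℝ} {J : Type*}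
    [Fintype J] (y : J → ∀ k, Fin (dims k) → ℝ) (hT : ∀ idx, T idx = ∑ j, ∏ k, y j k (idx k)) :
    nucPNorm p T ≤ ∑ j, ∏ k, lpNorm p (y j k) := by
  -- A zero factor is replaced by a unit vector, which needs every mode to be nonempty;
  -- otherwise `T` has no entries at all and the empty decomposition does.
  by_cases hne : ∀ k, Nonempty (Fin (dims k))
  · choose u hu hyu using fun j k => exists_lpNorm_eq_one_smul_eq (p := p) (y j k)
    have hprod : ∀ j, |∏ k, lpNorm p (y j k)| = ∏ k, lpNorm p (y j k) :=
      fun j => abs_of_nonneg (Finset.prod_nonneg fun k _ => lpNorm_nonneg _)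
    refine (nucPNorm_le_sum_abs _ u hu fun idx => ?_).trans_eq
      (Finset.sum_congr rfl fun j _ => hprod j)
    rw [hT idx]
    refine Finset.sum_congr rfl fun j _ => ?_
    rw [← Finset.prod_mul_distrib]
    exact Finset.prod_congr rfl fun k _ => congrFun (hyu j k).symm (idx k)
  · simp only [not_forall, not_nonempty_iff] at hne
    have : IsEmpty (∀ k, Fin (dims k)) := isEmpty_pi.mpr hne
    refine (nucPNorm_le_sum_abs (J := Empty) Empty.elim Empty.elim (fun j => j.elim)
      fun idx => isEmptyElim idx).trans ?_
    simp only [Finset.univ_eq_empty, Finset.sum_empty]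
    exact Finset.sum_nonneg fun j _ => Finset.prod_nonneg fun k _ => lpNorm_nonneg _

end Nuclear

section Fibers

variable {d : ℕ} {dims : Fin (d + 1) → ℕ}

/-- The factors `e_{i₁}, …, e_{i_d}, t_{i₁…i_d}` of the rank-one term of the fiber `i`. -/
def fiberFactors (T : (∀ k, Fin (dims k)) → ℝ) (i : ∀ k : Fin d, Fin (dims k.castSucc)) :
    ∀ k, Fin (dims k) → ℝ :=
  Fin.snoc (α := fun k => Fin (dims k) → ℝ) (fun k => Pi.single (i k) 1)
    fun a => T (Fin.snoc i a)

lemma eq_sum_prod_fiberFactors (T : (∀ k, Fin (dims k)) → ℝ) (idx : ∀ k, Fin (dims k)) :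
    T idx = ∑ i, ∏ k, fiberFactors T i k (idx k) := by
  simp only [fiberFactors, Fin.prod_univ_castSucc, Fin.snoc_castSucc, Fin.snoc_last]
  have hselect (i : ∀ k : Fin d, Fin (dims k.castSucc)) :
      ∏ k, (Pi.single (i k) 1 : Fin (dims k.castSucc) → ℝ) (idx k.castSucc) =
        if i = Fin.init idx then 1 else 0 :=
    prod_single_one_apply i (Fin.init idx)
  simp [hselect, Fin.snoc_init_self]

lemma prod_lpNorm_fiberFactors {p : ℝ≥0∞} [Fact (1 ≤ p)] (T : (∀ k, Fin (dims k)) → ℝ)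
    (i : ∀ k : Fin d, Fin (dims k.castSucc)) :
    ∏ k, lpNorm p (fiberFactors T i k) = lpNorm p fun a => T (Fin.snoc i a) := by
  simp [fiberFactors, Fin.prod_univ_castSucc, lpNorm_single]

end Fibers

/-- For a tensor `T` of order `d+1` and `p ∈ [1,∞]`:
`‖T‖_p ≤ ‖T‖_(p,*) ≤ ∑ ‖t_(i₁…i_d)‖_p`, where `‖T‖_p` is the entrywise `ℓ_p`-norm and
the sum runs over all mode-`(d+1)` fibers of `T`. -/
theorem stmt14 (d : ℕ) (dims : Fin (d + 1) → ℕ) (p : ℝ≥0∞) (hp : 1 ≤ p)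
    (T : (∀ k, Fin (dims k)) → ℝ) :
    lpNorm p T ≤ nucPNorm p T ∧
      nucPNorm p T ≤ ∑ i : ∀ k : Fin d, Fin (dims k.castSucc),
        lpNorm p (fun a : Fin (dims (Fin.last d)) => T (Fin.snoc i a)) := by
  have : Fact (1 ≤ p) := ⟨hp⟩
  refine ⟨lpNorm_le_nucPNorm T, ?_⟩
  simpa only [prod_lpNorm_fiberFactors] using
    nucPNorm_le_sum_prod_lpNorm (p := p) _ (eq_sum_prod_fiberFactors T)
end

section
/- For n, d ∈ ℕ and p ∈ [2, ∞], the spectral p-norm of the order-d identity tensor ∑_{i=1}^n e_i^{⊗d} equals 1 if p ≤ d, and equals n^{1−d/p} if p > d. -/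
open scoped ENNReal BigOperators

/-- The spectral `p`-norm of a tensor `T ∈ ℝ^(dims k₁ × ⋯ × dims k_d)`:
the supremum of `⟨T, x₁ ⊗ ⋯ ⊗ x_d⟩` over unit `ℓ_p`-vectors `x_k`. -/
noncomputable def specPNorm (p : ℝ≥0∞) {ι : Type*} [Fintype ι] [DecidableEq ι] {dims : ι → ℕ}
    (T : (∀ k, Fin (dims k)) → ℝ) : ℝ :=
  sSup { r | ∃ x : ∀ k, Fin (dims k) → ℝ,
    (∀ k, lpNorm p (x k) = 1) ∧ r = ∑ i, T i * ∏ k, x k (i k) }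


/-!
AM–GM bounds `∏ₖ xₖ(j)` by `(1/d) ∑ₖ |xₖ(j)|^d`, so `∑ⱼ ∏ₖ xₖ(j)` is at most the largest of the
`‖xₖ‖_d^d`. For a unit `ℓ_p`-vector, `‖x‖_d^d ≤ 1` when `p ≤ d` (its coordinates are at most `1`
in absolute value), and `‖x‖_d^d ≤ n^(1 - d/p)` when `d ≤ p` (Hölder against the constant vector).
The two bounds are attained at a standard basis vector and at the constant vector `n^(-1/p)`.
-/

open Finset

section
variable {ι κ : Type*} [Fintype ι] [Fintype κ]

theorem sum_identity_mul_prod [DecidableEq ι] [DecidableEq κ] (x : ι → κ → ℝ) :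
    ∑ i : ι → κ, (∑ j, ∏ k, if i k = j then (1 : ℝ) else 0) * ∏ k, x k (i k) =
      ∑ j, ∏ k, x k j := by
  simp only [Fintype.prod_boole, ← funext_iff, sum_mul, ite_mul, one_mul, zero_mul]
  rw [sum_comm]
  simp

theorem prod_le_sum_rpow_card_div_card [Nonempty ι] (a : ι → ℝ) :
    ∏ k, a k ≤ (∑ k, |a k| ^ (Fintype.card ι : ℝ)) / Fintype.card ι := by
  set m : ℝ := (Fintype.card ι : ℝ)
  have hm : 0 < m := Nat.cast_pos.mpr Fintype.card_pos
  calc ∏ k, a k ≤ ∏ k, |a k| := (le_abs_self _).trans_eq (abs_prod _ _)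
    _ = ∏ k, (|a k| ^ m) ^ m⁻¹ := by
      simp only [← Real.rpow_mul (abs_nonneg _), mul_inv_cancel₀ hm.ne', Real.rpow_one]
    _ ≤ ∑ k, m⁻¹ * |a k| ^ m :=
      Real.geom_mean_le_arith_mean_weighted _ _ _ (fun _ _ => by positivity)
        (by simp [m, hm.ne']) (fun _ _ => by positivity)
    _ = (∑ k, |a k| ^ m) / m := by rw [← mul_sum, inv_mul_eq_div]

theorem sum_prod_le_of_forall_sum_rpow_le [Nonempty ι] {C : ℝ} (x : ι → κ → ℝ)
    (hx : ∀ k, ∑ j, |x k j| ^ (Fintype.card ι : ℝ) ≤ C) :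
    ∑ j, ∏ k, x k j ≤ C := by
  have hm : (0 : ℝ) < Fintype.card ι := Nat.cast_pos.mpr Fintype.card_pos
  calc ∑ j, ∏ k, x k j
      ≤ ∑ j, (∑ k, |x k j| ^ (Fintype.card ι : ℝ)) / Fintype.card ι :=
        sum_le_sum fun j _ => prod_le_sum_rpow_card_div_card _
    _ = (∑ k, ∑ j, |x k j| ^ (Fintype.card ι : ℝ)) / Fintype.card ι := by
        rw [← sum_div, sum_comm]
    _ ≤ (∑ _k : ι, C) / Fintype.card ι := by gcongr with k; exact hx k
    _ = C := by rw [sum_const, card_univ, nsmul_eq_mul]; field_simp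

variable {p : ℝ≥0∞}

theorem lpNorm_eq_one_iff (hp0 : p ≠ 0) (hp : p ≠ ∞) {y : κ → ℝ} :
    lpNorm p y = 1 ↔ ∑ i, |y i| ^ p.toReal = 1 := by
  rw [lpNorm, if_neg hp, one_div, Real.rpow_inv_eq (sum_nonneg fun _ _ => by positivity)
    zero_le_one (ENNReal.toReal_pos hp0 hp).ne', Real.one_rpow]

theorem abs_le_one_of_lpNorm_eq_one (hp0 : p ≠ 0) {y : κ → ℝ} (hy : lpNorm p y = 1) (i : κ) :
    |y i| ≤ 1 := by
  rcases eq_or_ne p ∞ with rfl | hp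
  · rw [lpNorm, if_pos rfl] at hy
    exact hy ▸ le_ciSup (f := fun j => |y j|) (Finite.bddAbove_range _) i
  · have hyi : |y i| ^ p.toReal ≤ 1 := (lpNorm_eq_one_iff hp0 hp).1 hy ▸
      single_le_sum (f := fun i => |y i| ^ p.toReal) (fun _ _ => by positivity) (mem_univ i)
    exact not_lt.1 fun h => (Real.one_lt_rpow h (ENNReal.toReal_pos hp0 hp)).not_ge hyi

theorem sum_rpow_le_one_of_lpNorm_eq_one (hp0 : p ≠ 0) {s : ℝ} (hps : p ≤ ENNReal.ofReal s)
    {y : κ → ℝ} (hy : lpNorm p y = 1) : ∑ i, |y i| ^ s ≤ 1 := by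
  have hp : p ≠ ∞ := ne_top_of_le_ne_top ENNReal.ofReal_ne_top hps
  have hs : 0 < s := ENNReal.ofReal_pos.1 ((pos_iff_ne_zero.2 hp0).trans_le hps)
  calc ∑ i, |y i| ^ s ≤ ∑ i, |y i| ^ p.toReal :=
        sum_le_sum fun i _ => Real.rpow_le_rpow_of_exponent_ge' (abs_nonneg _)
          (abs_le_one_of_lpNorm_eq_one hp0 hy i) ENNReal.toReal_nonneg
          (ENNReal.toReal_le_of_le_ofReal hs.le hps)
    _ = 1 := (lpNorm_eq_one_iff hp0 hp).1 hy

/- For `p = ∞` the exponent is `1 - s / 0 = 1`, so the bound reads `card κ`. -/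
theorem sum_rpow_le_card_rpow_of_lpNorm_eq_one {s : ℝ} (hs : 0 < s)
    (hsp : ENNReal.ofReal s ≤ p) {y : κ → ℝ} (hy : lpNorm p y = 1) :
    ∑ i, |y i| ^ s ≤ (Fintype.card κ : ℝ) ^ (1 - s / p.toReal) := by
  have hp0 : p ≠ 0 := (ENNReal.ofReal_pos.2 hs).trans_le hsp |>.ne'
  rcases eq_or_ne p ∞ with rfl | hp
  · calc ∑ i, |y i| ^ s ≤ ∑ _i : κ, (1 : ℝ) := by
          gcongr with i
          exact Real.rpow_le_one (abs_nonneg _) (abs_le_one_of_lpNorm_eq_one hp0 hy i) hs.le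
      _ = (Fintype.card κ : ℝ) ^ (1 - s / (∞ : ℝ≥0∞).toReal) := by simp
  · have ht : s ≤ p.toReal := (ENNReal.ofReal_le_iff_le_toReal hp).1 hsp
    have hq : 1 ≤ p.toReal / s := (one_le_div hs).2 ht
    have holder := Real.inner_le_weight_mul_Lp_of_nonneg univ hq (fun _ => 1)
      (fun i => |y i| ^ s) (fun _ => zero_le_one) (fun _ => by positivity)
    simp only [one_mul, ← Real.rpow_mul (abs_nonneg _), mul_div_cancel₀ _ hs.ne',
      (lpNorm_eq_one_iff hp0 hp).1 hy, Real.one_rpow, mul_one, inv_div] at holder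
    simpa using holder

theorem lpNorm_pi_single [DecidableEq κ] (hp0 : p ≠ 0) (i : κ) :
    lpNorm p (Pi.single i 1 : κ → ℝ) = 1 := by
  rcases eq_or_ne p ∞ with rfl | hp
  · have : Nonempty κ := ⟨i⟩
    rw [lpNorm, if_pos rfl]
    refine le_antisymm (ciSup_le fun j => ?_)
      (le_ciSup_of_le (Finite.bddAbove_range _) i (by simp))
    rcases eq_or_ne j i with rfl | hj <;> simp [*]
  · rw [lpNorm_eq_one_iff hp0 hp]
    simp [Pi.single_apply, apply_ite, Real.zero_rpow (ENNReal.toReal_pos hp0 hp).ne']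

/- For `p = ∞` the exponent `-(0 : ℝ)⁻¹` is `0`: this is the all-ones vector. -/
theorem lpNorm_const_card_rpow [Nonempty κ] (hp0 : p ≠ 0) :
    lpNorm p (fun _ : κ => (Fintype.card κ : ℝ) ^ (-p.toReal⁻¹)) = 1 := by
  rcases eq_or_ne p ∞ with rfl | hp
  · simp [lpNorm]
  · have hn : (0 : ℝ) < Fintype.card κ := Nat.cast_pos.mpr Fintype.card_pos
    rw [lpNorm_eq_one_iff hp0 hp, sum_const, card_univ, nsmul_eq_mul,
      abs_of_pos (Real.rpow_pos_of_pos hn _), ← Real.rpow_mul hn.le,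
      neg_mul, inv_mul_cancel₀ (ENNReal.toReal_pos hp0 hp).ne', Real.rpow_neg_one,
      mul_inv_cancel₀ hn.ne']

theorem sum_prod_pi_single [Nonempty ι] [DecidableEq κ] (i : κ) :
    ∑ j, ∏ _k : ι, (Pi.single i 1 : κ → ℝ) j = 1 := by
  simp [Pi.single_apply, zero_pow Fintype.card_ne_zero]

theorem sum_prod_const_card_rpow [Nonempty κ] (t : ℝ) :
    ∑ _j : κ, ∏ _k : ι, (Fintype.card κ : ℝ) ^ (-t⁻¹) =
      (Fintype.card κ : ℝ) ^ (1 - Fintype.card ι / t) := by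
  have hn : (0 : ℝ) < Fintype.card κ := Nat.cast_pos.mpr Fintype.card_pos
  rw [sum_const, prod_const, card_univ, card_univ, nsmul_eq_mul, ← Real.rpow_natCast,
    ← Real.rpow_mul hn.le, sub_eq_add_neg, Real.rpow_add hn, Real.rpow_one]
  ring_nf

def identityPairings (p : ℝ≥0∞) (ι κ : Type*) [Fintype ι] [Fintype κ] : Set ℝ :=
  {r | ∃ x : ι → κ → ℝ, (∀ k, lpNorm p (x k) = 1) ∧ r = ∑ j, ∏ k, x k j}

theorem specPNorm_identity_eq_sSup [DecidableEq ι] (n : ℕ) :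
    specPNorm p (dims := fun _ : ι => n)
      (fun idx => ∑ j : Fin n, ∏ k, if idx k = j then (1 : ℝ) else 0) =
      sSup (identityPairings p ι (Fin n)) := by
  simp only [specPNorm, identityPairings, sum_identity_mul_prod]

theorem isGreatest_identityPairings_one [Nonempty ι] [Nonempty κ] (hp0 : p ≠ 0)
    (hp : p ≤ Fintype.card ι) : IsGreatest (identityPairings p ι κ) 1 := by
  classical
  obtain ⟨i⟩ := ‹Nonempty κ›
  refine ⟨⟨fun _ => Pi.single i 1, fun _ => lpNorm_pi_single hp0 i,
    (sum_prod_pi_single i).symm⟩, ?_⟩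
  rintro r ⟨x, hx, rfl⟩
  exact sum_prod_le_of_forall_sum_rpow_le x fun k =>
    sum_rpow_le_one_of_lpNorm_eq_one hp0 (by simpa using hp) (hx k)

theorem isGreatest_identityPairings_card_rpow [Nonempty ι] [Nonempty κ]
    (hp : (Fintype.card ι : ℝ≥0∞) ≤ p) :
    IsGreatest (identityPairings p ι κ)
      ((Fintype.card κ : ℝ) ^ (1 - Fintype.card ι / p.toReal)) := by
  have hm : (0 : ℝ) < Fintype.card ι := Nat.cast_pos.mpr Fintype.card_pos
  have hp0 : p ≠ 0 := (Nat.cast_pos.mpr Fintype.card_pos).trans_le hp |>.ne'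
  refine ⟨⟨fun _ _ => (Fintype.card κ : ℝ) ^ (-p.toReal⁻¹),
    fun _ => lpNorm_const_card_rpow hp0, (sum_prod_const_card_rpow _).symm⟩, ?_⟩
  rintro r ⟨x, hx, rfl⟩
  exact sum_prod_le_of_forall_sum_rpow_le x fun k =>
    sum_rpow_le_card_rpow_of_lpNorm_eq_one hm (by simpa using hp) (hx k)

end

/-- For `n, d ≥ 1` and `p ∈ [2,∞]`, the spectral `p`-norm of the order-`d` identity
tensor `∑_(j=1)^n e_j^(⊗d)` equals `1` if `p ≤ d` and `n^(1 - d/p)` if `p > d`. -/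
theorem stmt15 (n d : ℕ) (hn : 0 < n) (hd : 0 < d) (p : ℝ≥0∞) (hp : 2 ≤ p) :
    (p ≤ (d : ℝ≥0∞) →
      specPNorm p (dims := fun _ : Fin d => n)
        (fun idx => ∑ j : Fin n, ∏ k : Fin d, (if idx k = j then (1 : ℝ) else 0)) = 1) ∧
    ((d : ℝ≥0∞) < p →
      specPNorm p (dims := fun _ : Fin d => n)
        (fun idx => ∑ j : Fin n, ∏ k : Fin d, (if idx k = j then (1 : ℝ) else 0)) =
        (n : ℝ) ^ (1 - (d : ℝ) / p.toReal)) := by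
  have : Nonempty (Fin n) := Fin.pos_iff_nonempty.1 hn
  have : Nonempty (Fin d) := Fin.pos_iff_nonempty.1 hd
  have hp0 : p ≠ 0 := (two_pos.trans_le hp).ne'
  rw [specPNorm_identity_eq_sSup]
  refine ⟨fun hpd => ?_, fun hdp => ?_⟩
  · exact (isGreatest_identityPairings_one hp0 (by simpa using hpd)).csSup_eq
  · simpa using (isGreatest_identityPairings_card_rpow (ι := Fin d) (κ := Fin n)
      (by simpa using hdp.le)).csSup_eq
end

section
/- Let n, d, r ∈ ℕ with p = d ≥ 2. Suppose λ_i ≥ 0 and x_i ∈ ℝ^n with x_i ≥ 0 entrywise and ‖x_i‖_p = 1 for i = 1,…,r. Then the nuclear p-norm of T = ∑_{i=1}^r λ_i x_i^{⊗d} equals ∑_{i=1}^r λ_i. -/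
open scoped ENNReal BigOperators

/-!
The diagonal functional `T ↦ ∑_j T(j, …, j)`, i.e. pairing with `Z = ∑_j e_j^{⊗d}`, is at most `1`
on every rank-one tensor `x^1 ⊗ ⋯ ⊗ x^d` with unit `ℓ_d` factors: by AM-GM,
`∏_k |x^k_j| ≤ (1/d) ∑_k |x^k_j|^d`, and summing over `j` gives `1`. Hence it bounds the nuclear
`d`-norm from below. On `T = ∑ λ_i x_i^{⊗d}` with `x_i ≥ 0` it takes the value
`∑_i λ_i ∑_j x_{ij}^d = ∑ λ_i`, which is also the cost of the given decomposition.
-/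

open Finset

lemma sum_abs_pow_eq_one_of_lpNorm_eq_one {ι : Type*} [Fintype ι] {d : ℕ} (hd : d ≠ 0)
    {y : ι → ℝ} (h : lpNorm (d : ℝ≥0∞) y = 1) : ∑ j, |y j| ^ d = 1 := by
  rw [lpNorm, if_neg (ENNReal.natCast_ne_top d), ENNReal.toReal_natCast] at h
  simp_rw [← Real.rpow_natCast]
  have hS : 0 ≤ ∑ j, |y j| ^ (d : ℝ) := sum_nonneg fun j _ => by positivity
  rw [← Real.rpow_inv_natCast_pow hS hd, ← one_div, h, one_pow]

lemma prod_le_sum_pow_div {d : ℕ} (hd : d ≠ 0) {z : Fin d → ℝ} (hz : ∀ k, 0 ≤ z k) :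
    ∏ k, z k ≤ ∑ k, z k ^ d / d := by
  have hw : ∑ _k : Fin d, (1 / d : ℝ) = 1 := by simp [hd]
  calc ∏ k, z k = ∏ k, (z k ^ d) ^ (1 / d : ℝ) := by
        refine prod_congr rfl fun k _ => ?_
        rw [one_div, Real.pow_rpow_inv_natCast (hz k) hd]
    _ ≤ ∑ k, 1 / d * z k ^ d :=
        Real.geom_mean_le_arith_mean_weighted _ _ _ (fun _ _ => by positivity) hw
          (fun k _ => pow_nonneg (hz k) d)
    _ = ∑ k, z k ^ d / d := by simp_rw [one_div_mul_eq_div]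

lemma sum_prod_abs_le_one {ι : Type*} [Fintype ι] {d : ℕ} (hd : d ≠ 0) {y : Fin d → ι → ℝ}
    (h : ∀ k, ∑ j, |y k j| ^ d = 1) : ∑ j, ∏ k, |y k j| ≤ 1 := by
  calc ∑ j, ∏ k, |y k j| ≤ ∑ j, ∑ k, |y k j| ^ d / d :=
        sum_le_sum fun j _ => prod_le_sum_pow_div hd fun k => abs_nonneg _
    _ = ∑ k, (∑ j, |y k j| ^ d) / d := by rw [sum_comm]; simp_rw [sum_div]
    _ = 1 := by simp [h, hd]

def IsUnitDecomposition (p : ℝ≥0∞) {ι : Type*} [Fintype ι] {dims : ι → ℕ}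
    (T : (∀ k, Fin (dims k)) → ℝ) {r : ℕ} (lam : Fin r → ℝ)
    (x : Fin r → ∀ k, Fin (dims k) → ℝ) : Prop :=
  (∀ i k, lpNorm p (x i k) = 1) ∧ ∀ idx, T idx = ∑ i, lam i * ∏ k, x i k (idx k)

section NuclearNorm

variable {p : ℝ≥0∞} {ι : Type*} [Fintype ι] {dims : ι → ℕ} {T : (∀ k, Fin (dims k)) → ℝ}
  {r : ℕ} {lam : Fin r → ℝ} {x : Fin r → ∀ k, Fin (dims k) → ℝ}

lemma nucPNorm_le (h : IsUnitDecomposition p T lam x) : nucPNorm p T ≤ ∑ i, |lam i| := by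
  refine csInf_le ⟨0, ?_⟩ ⟨r, lam, x, h.1, h.2, rfl⟩
  rintro s ⟨_, _, _, _, _, rfl⟩
  exact sum_nonneg fun i _ => abs_nonneg _

lemma le_nucPNorm {c : ℝ} (h : IsUnitDecomposition p T lam x)
    (hc : ∀ (r' : ℕ) (lam' : Fin r' → ℝ) (x' : Fin r' → ∀ k, Fin (dims k) → ℝ),
      IsUnitDecomposition p T lam' x' → c ≤ ∑ i, |lam' i|) :
    c ≤ nucPNorm p T := by
  refine le_csInf ⟨_, r, lam, x, h.1, h.2, rfl⟩ ?_
  rintro s ⟨r', lam', x', hx', hT', rfl⟩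
  exact hc r' lam' x' ⟨hx', hT'⟩

end NuclearNorm

lemma sum_diag_le_sum_abs {n d r : ℕ} (hd : d ≠ 0) {T : (Fin d → Fin n) → ℝ}
    {lam : Fin r → ℝ} {x : Fin r → Fin d → Fin n → ℝ}
    (h : IsUnitDecomposition (d : ℝ≥0∞) (dims := fun _ => n) T lam x) :
    ∑ j, T (fun _ => j) ≤ ∑ i, |lam i| := by
  have hfactor : ∀ i, |∑ j, ∏ k, x i k j| ≤ 1 := fun i =>
    calc |∑ j, ∏ k, x i k j| ≤ ∑ j, ∏ k, |x i k j| := by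
          simpa only [abs_prod] using abs_sum_le_sum_abs (fun j => ∏ k, x i k j) univ
      _ ≤ 1 := sum_prod_abs_le_one hd fun k =>
          sum_abs_pow_eq_one_of_lpNorm_eq_one hd (h.1 i k)
  calc ∑ j, T (fun _ => j) = ∑ i, lam i * ∑ j, ∏ k, x i k j := by
        simp_rw [h.2, mul_sum]; exact sum_comm
    _ ≤ ∑ i, |lam i| * |∑ j, ∏ k, x i k j| :=
        sum_le_sum fun i _ => (abs_mul (lam i) _).symm ▸ le_abs_self _
    _ ≤ ∑ i, |lam i| :=
        sum_le_sum fun i _ => mul_le_of_le_one_right (abs_nonneg _) (hfactor i)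

lemma sum_diag_sum_mul_prod {n d r : ℕ} (hd : d ≠ 0) {lam : Fin r → ℝ} {x : Fin r → Fin n → ℝ}
    (hx : ∀ i j, 0 ≤ x i j) (hxn : ∀ i, lpNorm (d : ℝ≥0∞) (x i) = 1) :
    ∑ j, ∑ i, lam i * ∏ _k : Fin d, x i j = ∑ i, lam i := by
  rw [sum_comm]
  refine sum_congr rfl fun i _ => ?_
  have hsum := sum_abs_pow_eq_one_of_lpNorm_eq_one hd (hxn i)
  simp_rw [abs_of_nonneg (hx i _)] at hsum
  simp [← mul_sum, hsum]

/-- For `p = d ≥ 2`, nonnegative weights `λ_i` and entrywise nonnegative unit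
`ℓ_p`-vectors `x_i`, the nuclear `p`-norm of `T = ∑ λ_i x_i^(⊗d)` equals `∑ λ_i`. -/
theorem stmt16 (n d r : ℕ) (hd : 2 ≤ d) (lam : Fin r → ℝ) (x : Fin r → Fin n → ℝ)
    (hlam : ∀ i, 0 ≤ lam i) (hx : ∀ i j, 0 ≤ x i j)
    (hxn : ∀ i, lpNorm (d : ℝ≥0∞) (x i) = 1) :
    nucPNorm (d : ℝ≥0∞) (dims := fun _ : Fin d => n)
      (fun idx => ∑ i, lam i * ∏ k : Fin d, x i (idx k)) = ∑ i, lam i := by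
  have hd0 : d ≠ 0 := by omega
  have hdec : IsUnitDecomposition (d : ℝ≥0∞) (dims := fun _ : Fin d => n)
      (fun idx => ∑ i, lam i * ∏ k : Fin d, x i (idx k)) lam (fun i _ => x i) :=
    ⟨fun i _ => hxn i, fun _ => rfl⟩
  apply le_antisymm
  · calc _ ≤ ∑ i, |lam i| := nucPNorm_le hdec
      _ = ∑ i, lam i := sum_congr rfl fun i _ => abs_of_nonneg (hlam i)
  · refine le_nucPNorm hdec fun _ _ _ h => ?_
    rw [← sum_diag_sum_mul_prod hd0 hx hxn]
    exact sum_diag_le_sum_abs hd0 h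
end

section
/- Let p ∈ (1, ∞), q its conjugate, α ≥ 1, β ≥ α+1, and x ∈ S_q^n. With the sets D_j(x) (j = 0,1,…,m) defined by the dyadic-like thresholds (β^{j−1}/(αn))^{1/q}, define z ∈ ℝ^n by z_i = sign(x_i) for i ∈ D_0(x) ∪ D_1(x) and z_i = sign(x_i)·β^{(j−1)/p} for i ∈ D_j(x), j ≥ 2. Then ‖z‖_p^p ≤ (α+1)n and zᵀx ≥ (αn/β)^{1/p} (1 − 1/α); consequently xᵀ(z/‖z‖_p) ≥ (α/(β(α+1)))^{1/p} (1 − 1/α). -/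
/-!
Put `tᵢ = αn|xᵢ|^q`. Coordinate `i` lies in `D_{k+1}` exactly when `β^k < tᵢ ≤ β^{k+1}`,
and in `D_0` when `tᵢ ≤ 1`, which we treat as level `k = 0`; in both cases `|zᵢ|^p = β^k`.
Hence `|zᵢ|^p ≤ 1 + tᵢ`, which sums to `‖z‖_p^p ≤ (α+1)n`, and `tᵢ ≤ β |zᵢ|^p`, which
together with `q = q/p + 1` gives `zᵢxᵢ = |zᵢ||xᵢ| ≥ (αn/β)^{1/p} |xᵢ|^q`. Summing,
`zᵀx ≥ (αn/β)^{1/p}`, and the normalized bound is the quotient of the two estimates.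
-/

lemma ite_nonneg_one_neg_one_mul_self (t : ℝ) : (if 0 ≤ t then 1 else -1) * t = |t| := by
  split_ifs with h
  · rw [one_mul, abs_of_nonneg h]
  · rw [neg_one_mul, abs_of_neg (not_le.mp h)]

lemma abs_ite_nonneg_one_neg_one (t : ℝ) : |(if 0 ≤ t then 1 else -1 : ℝ)| = 1 := by
  split_ifs <;> simp

lemma exists_pow_lt_le_pow_succ {β t : ℝ} (hβ : 1 < β) (ht : 1 < t) :
    ∃ k : ℕ, β ^ k < t ∧ t ≤ β ^ (k + 1) := by
  classical
  have hex : ∃ j : ℕ, t ≤ β ^ j := (pow_unbounded_of_one_lt t hβ).imp fun _ h => h.le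
  have hpos : Nat.find hex ≠ 0 := fun h0 => by
    have := Nat.find_spec hex
    rw [h0, pow_zero] at this
    linarith
  refine ⟨Nat.find hex - 1, not_le.mp (Nat.find_min hex (by omega)), ?_⟩
  rw [Nat.sub_add_cancel (Nat.one_le_iff_ne_zero.mpr hpos)]
  exact Nat.find_spec hex

lemma div_rpow_mul_rpow_le_mul {p q a b c β : ℝ} (hp : 0 < p) (hq : 0 < q)
    (hpq : 1 / p + 1 / q = 1) (ha : 0 ≤ a) (hb : 0 ≤ b) (hc : 0 ≤ c) (hβ : 0 < β)
    (h : c * a ^ q ≤ β * b ^ p) : (c / β) ^ (1 / p) * a ^ q ≤ b * a := by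
  have hq_eq : q = q * (1 / p) + 1 := by
    have := congrArg (q * ·) hpq
    field_simp at this ⊢
    linarith
  have hsplit : a ^ q = (a ^ q) ^ (1 / p) * a := by
    rw [← Real.rpow_mul ha]
    nth_rewrite 1 [hq_eq]
    rw [Real.rpow_add' ha (by rw [← hq_eq]; exact hq.ne'), Real.rpow_one]
  calc (c / β) ^ (1 / p) * a ^ q = (c / β) ^ (1 / p) * ((a ^ q) ^ (1 / p) * a) := by
        rw [← hsplit]
    _ = (c / β * a ^ q) ^ (1 / p) * a := by
        rw [Real.mul_rpow (by positivity) (by positivity)]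
        ring
    _ ≤ (b ^ p) ^ (1 / p) * a := by
        gcongr
        rw [div_mul_eq_mul_div, div_le_iff₀ hβ]
        linarith
    _ = b * a := by rw [← Real.rpow_mul hb, mul_one_div_cancel hp.ne', Real.rpow_one]

section Levels

variable {p q α β : ℝ} {n : ℕ} {x : Fin n → ℝ} {m : ℕ} {D : ℕ → Set (Fin n)}
  {z : Fin n → ℝ}

lemma mem_zero_of_mul_rpow_le_one (hq : 0 < q) (hαn : 0 < α * n)
    (hD0 : D 0 = {i | |x i| ≤ (α * n) ^ (-(1 / q))}) {i : Fin n}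
    (h : α * n * |x i| ^ q ≤ 1) : i ∈ D 0 := by
  rw [hD0, Set.mem_ofPred_eq, Real.rpow_neg hαn.le, ← Real.inv_rpow hαn.le, one_div,
    Real.le_rpow_inv_iff_of_pos (abs_nonneg _) (by positivity) hq, ← one_div,
    le_div_iff₀ hαn]
  linarith

lemma succ_le_of_pow_lt_mul_rpow (hαn : 0 < α * n) (hβ : 1 < β)
    (hx : ∑ i, |x i| ^ q = 1) (hm : m = ⌈Real.logb β (α * n)⌉₊) {i : Fin n} {k : ℕ}
    (hlo : β ^ k < α * n * |x i| ^ q) : k + 1 ≤ m := by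
  have hxi : |x i| ^ q ≤ 1 :=
    hx ▸ Finset.single_le_sum (f := fun j => |x j| ^ q) (fun j _ => by positivity)
      (Finset.mem_univ i)
  rw [hm, Nat.add_one_le_iff, Nat.lt_ceil, Real.lt_logb_iff_rpow_lt hβ hαn, Real.rpow_natCast]
  nlinarith

lemma mem_succ_of_pow_lt_le (hq : 0 < q) (hαn : 0 < α * n) (hβ : 1 < β) {k : ℕ}
    (hkm : k + 1 ≤ m)
    (hDj : ∀ j, 0 < j → j ≤ m →
      D j = {i | (β ^ (j - 1) / (α * n)) ^ (1 / q) < |x i| ∧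
                 |x i| ≤ (β ^ j / (α * n)) ^ (1 / q)})
    {i : Fin n} (hlo : β ^ k < α * n * |x i| ^ q) (hhi : α * n * |x i| ^ q ≤ β ^ (k + 1)) :
    i ∈ D (k + 1) := by
  have hβ0 : 0 < β := by linarith
  rw [hDj (k + 1) k.succ_pos hkm, Nat.add_sub_cancel, Set.mem_ofPred_eq, one_div,
    Real.rpow_inv_lt_iff_of_pos (by positivity) (abs_nonneg _) hq,
    Real.le_rpow_inv_iff_of_pos (abs_nonneg _) (by positivity) hq, div_lt_iff₀ hαn,
    le_div_iff₀ hαn]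
  constructor <;> linarith

lemma exists_level (hq : 0 < q) (hαn : 0 < α * n) (hβ : 1 < β)
    (hx : ∑ i, |x i| ^ q = 1) (hm : m = ⌈Real.logb β (α * n)⌉₊)
    (hD0 : D 0 = {i | |x i| ≤ (α * n) ^ (-(1 / q))})
    (hDj : ∀ j, 0 < j → j ≤ m →
      D j = {i | (β ^ (j - 1) / (α * n)) ^ (1 / q) < |x i| ∧
                 |x i| ≤ (β ^ j / (α * n)) ^ (1 / q)})
    (hz01 : ∀ i, i ∈ D 0 ∪ D 1 → z i = if 0 ≤ x i then 1 else -1)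
    (hzj : ∀ j, 2 ≤ j → j ≤ m → ∀ i ∈ D j,
      z i = (if 0 ≤ x i then 1 else -1) * β ^ (((j : ℝ) - 1) / p))
    (i : Fin n) :
    ∃ k : ℕ, z i = (if 0 ≤ x i then 1 else -1) * β ^ ((k : ℝ) / p) ∧
      β ^ k ≤ 1 + α * n * |x i| ^ q ∧ α * n * |x i| ^ q ≤ β ^ (k + 1) := by
  rcases le_or_gt (α * n * |x i| ^ q) 1 with hsmall | hlarge
  · refine ⟨0, ?_, ?_, ?_⟩
    · rw [hz01 i (Or.inl (mem_zero_of_mul_rpow_le_one hq hαn hD0 hsmall)), Nat.cast_zero,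
        zero_div, Real.rpow_zero, mul_one]
    · have : 0 ≤ α * n * |x i| ^ q := by positivity
      rw [pow_zero]
      linarith
    · rw [zero_add, pow_one]
      linarith
  · obtain ⟨k, hlo, hhi⟩ := exists_pow_lt_le_pow_succ hβ hlarge
    have hkm := succ_le_of_pow_lt_mul_rpow hαn hβ hx hm hlo
    have hmem := mem_succ_of_pow_lt_le hq hαn hβ hkm hDj hlo hhi
    refine ⟨k, ?_, by linarith, hhi⟩
    rcases k.eq_zero_or_pos with rfl | hk
    · rw [hz01 i (Or.inr hmem), Nat.cast_zero, zero_div, Real.rpow_zero, mul_one]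
    · rw [hzj (k + 1) (by omega) hkm i hmem, Nat.cast_add_one, add_sub_cancel_right]

end Levels

lemma rpow_natCast_div_rpow {p β : ℝ} (hp : p ≠ 0) (hβ : 0 ≤ β) (k : ℕ) :
    (β ^ ((k : ℝ) / p)) ^ p = β ^ k := by
  rw [← Real.rpow_mul hβ, div_mul_cancel₀ _ hp, Real.rpow_natCast]

lemma abs_ite_nonneg_one_neg_one_mul_rpow_rpow {p β : ℝ} (hp : p ≠ 0) (hβ : 0 ≤ β) (t : ℝ) (k : ℕ) :
    |(if 0 ≤ t then 1 else -1) * β ^ ((k : ℝ) / p)| ^ p = β ^ k := by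
  rw [abs_mul, abs_ite_nonneg_one_neg_one, one_mul, abs_of_nonneg (by positivity),
    rpow_natCast_div_rpow hp hβ]

lemma ite_nonneg_one_neg_one_mul_mul_self (b t : ℝ) :
    (if 0 ≤ t then 1 else -1) * b * t = b * |t| := by
  rw [mul_right_comm, ite_nonneg_one_neg_one_mul_self, mul_comm]

section Sums

variable {ι : Type*} [Fintype ι] {p q c β : ℝ} {x z : ι → ℝ} {k : ι → ℕ}

lemma sum_abs_rpow_le_of_level (hp : p ≠ 0) (hβ : 0 ≤ β) (hx : ∑ i, |x i| ^ q = 1)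
    (hz : ∀ i, z i = (if 0 ≤ x i then 1 else -1) * β ^ ((k i : ℝ) / p))
    (hk : ∀ i, β ^ k i ≤ 1 + c * |x i| ^ q) :
    ∑ i, |z i| ^ p ≤ Fintype.card ι + c := calc
  ∑ i, |z i| ^ p ≤ ∑ i, (1 + c * |x i| ^ q) := by
    gcongr with i
    rw [hz i, abs_ite_nonneg_one_neg_one_mul_rpow_rpow hp hβ]
    exact hk i
  _ = Fintype.card ι + c := by
    rw [Finset.sum_add_distrib, ← Finset.mul_sum, hx, mul_one, Finset.sum_const,
      Finset.card_univ, nsmul_one]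

lemma le_sum_mul_of_level (hp : 0 < p) (hq : 0 < q) (hpq : 1 / p + 1 / q = 1) (hc : 0 ≤ c)
    (hβ : 0 < β) (hx : ∑ i, |x i| ^ q = 1)
    (hz : ∀ i, z i = (if 0 ≤ x i then 1 else -1) * β ^ ((k i : ℝ) / p))
    (hk : ∀ i, c * |x i| ^ q ≤ β ^ (k i + 1)) :
    (c / β) ^ (1 / p) ≤ ∑ i, z i * x i := calc
  (c / β) ^ (1 / p) = ∑ i, (c / β) ^ (1 / p) * |x i| ^ q := by
    rw [← Finset.mul_sum, hx, mul_one]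
  _ ≤ ∑ i, z i * x i := Finset.sum_le_sum fun i _ => by
    rw [hz i, ite_nonneg_one_neg_one_mul_mul_self]
    refine div_rpow_mul_rpow_le_mul hp hq hpq (abs_nonneg _) (by positivity) hc hβ ?_
    rw [rpow_natCast_div_rpow hp.ne' hβ.le, ← pow_succ']
    exact hk i

end Sums

/-- For `x ∈ S_q^n`, with the sets `D_j(x)` defined by the thresholds
`(β^(j-1)/(αn))^(1/q)` and the vector `z` defined by `z_i = sign(x_i)` on
`D_0(x) ∪ D_1(x)` and `z_i = sign(x_i) β^((j-1)/p)` on `D_j(x)` for `j ≥ 2`: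
`‖z‖_p^p ≤ (α+1)n`, `zᵀx ≥ (αn/β)^(1/p) (1 - 1/α)`, and consequently
`xᵀ(z/‖z‖_p) ≥ (α/(β(α+1)))^(1/p) (1 - 1/α)`. -/
theorem stmt19 (p q α β : ℝ) (n : ℕ) (hn : 0 < n) (hp : 1 < p)
    (hpq : 1 / p + 1 / q = 1) (hα : 1 ≤ α) (hβ : α + 1 ≤ β)
    (x : Fin n → ℝ) (hx : ∑ i, |x i| ^ q = 1)
    (m : ℕ) (hm : m = ⌈Real.logb β (α * n)⌉₊)
    (D : ℕ → Set (Fin n))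
    (hD0 : D 0 = {i | |x i| ≤ (α * n) ^ (-(1 / q))})
    (hDj : ∀ j, 0 < j → j ≤ m →
      D j = {i | (β ^ (j - 1) / (α * n)) ^ (1 / q) < |x i| ∧
                 |x i| ≤ (β ^ j / (α * n)) ^ (1 / q)})
    (z : Fin n → ℝ)
    (hz01 : ∀ i, i ∈ D 0 ∪ D 1 → z i = if 0 ≤ x i then 1 else -1)
    (hzj : ∀ j, 2 ≤ j → j ≤ m → ∀ i ∈ D j,
      z i = (if 0 ≤ x i then 1 else -1) * β ^ (((j : ℝ) - 1) / p)) :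
    (∑ i, |z i| ^ p) ≤ (α + 1) * n ∧
    (α * n / β) ^ (1 / p) * (1 - 1 / α) ≤ ∑ i, z i * x i ∧
    (α / (β * (α + 1))) ^ (1 / p) * (1 - 1 / α) ≤
      ∑ i, x i * (z i / (∑ i, |z i| ^ p) ^ (1 / p)) := by
  have hp0 : 0 < p := by linarith
  have hq0 : 0 < q := one_div_pos.mp (by linarith [(div_lt_one hp0).mpr hp])
  have hα0 : 0 < α := by linarith
  have hβ0 : 0 < β := by linarith
  have hαn : 0 < α * n := by positivity
  have hα_le : 1 - 1 / α ≤ 1 := by linarith [one_div_pos.mpr hα0]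
  choose k hz hk_le hk_ge using exists_level hq0 hαn (by linarith) hx hm hD0 hDj hz01 hzj
  have hnorm : ∑ i, |z i| ^ p ≤ (α + 1) * n := by
    have := sum_abs_rpow_le_of_level hp0.ne' hβ0.le hx hz hk_le
    rw [Fintype.card_fin] at this
    linarith
  have hinner := le_sum_mul_of_level hp0 hq0 hpq hαn.le hβ0 hx hz hk_ge
  have hnorm_pos : 0 < ∑ i, |z i| ^ p := Finset.sum_pos
    (fun i _ => by rw [hz i, abs_ite_nonneg_one_neg_one_mul_rpow_rpow hp0.ne' hβ0.le]; positivity)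
    (Finset.univ_nonempty_iff.mpr ⟨⟨0, hn⟩⟩)
  refine ⟨hnorm, (mul_le_of_le_one_right (by positivity) hα_le).trans hinner, ?_⟩
  calc (α / (β * (α + 1))) ^ (1 / p) * (1 - 1 / α) ≤ (α / (β * (α + 1))) ^ (1 / p) :=
        mul_le_of_le_one_right (by positivity) hα_le
    _ = (α * n / β) ^ (1 / p) / ((α + 1) * n) ^ (1 / p) := by
        rw [← Real.div_rpow (by positivity) (by positivity)]
        congr 1
        field_simp
    _ ≤ (∑ i, z i * x i) / (∑ i, |z i| ^ p) ^ (1 / p) :=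
        div_le_div₀ ((Real.rpow_nonneg (by positivity) _).trans hinner) hinner (by positivity)
          (Real.rpow_le_rpow hnorm_pos.le hnorm (by positivity))
    _ = ∑ i, x i * (z i / (∑ i, |z i| ^ p) ^ (1 / p)) := by
        rw [Finset.sum_div]
        exact Finset.sum_congr rfl fun i _ => by ring
end
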